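/- arXiv:math/0207065 — 4 statements merged into one kernel-verified Lean document; each statement's English description precedes it below -/
import Mathlib

section
/- Let μ be a positive, finite Borel measure with compact support K ⊆ ℝ^d, and let m > 0. Then there exist N ≤ dim(ℝ_m[t₁,...,t_d]), nodes x₁,...,x_N ∈ K, and positive weights ρ₁,...,ρ_N such that ∫ p dμ = ∑_{k=1}^N ρ_k p(x_k) for every real polynomial p of total degree at most m. -/
/-!
Let `g t ∈ ℝ^D` be the vector of values at `t` of a basis of the polynomials of degree at most `m`.
The moment vector `∫ g dμ` is `μ(ℝ^d)` times the average of `g`, which lies in the convex hull of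
the compact set `g(K)` (closed, since in finite dimension the convex hull of a compact set is
compact). Carathéodory's theorem writes the average as a positive combination of affinely
independent points `g(x_k)`. They all lie on the hyperplane `ℓ = 1`, where `ℓ` is the linear form
that recovers the constant polynomial `1` from its basis values, so there are at most `D` of them.
Every polynomial `p` of degree at most `m` is a linear form of `g`, and applying that form to
`∫ g dμ = ∑ ρ_k g(x_k)` gives the quadrature rule.
-/

open MeasureTheory MvPolynomial

/-- The closed support of a Borel measure: the set of points all of whose
neighborhoods have positive measure. -/
def msupport {E : Type*} [TopologicalSpace E] [MeasurableSpace E] (μ : Measure E) : Set E :=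
  {x | ∀ U ∈ nhds x, μ U ≠ 0}

theorem msupport_eq_support {E : Type*} [TopologicalSpace E] [MeasurableSpace E]
    (μ : Measure E) : msupport μ = μ.support := by
  ext x
  simp only [msupport, Set.mem_ofPred_eq, Measure.mem_support_iff_forall, pos_iff_ne_zero]

section Caratheodory

variable {k E : Type*} [Field k] [LinearOrder k] [IsStrictOrderedRing k]
  [AddCommGroup E] [Module k E]

theorem eq_pos_convex_span_fin_of_mem_convexHull {s : Set E} {x : E}
    (hx : x ∈ convexHull k s) :
    ∃ (N : ℕ) (z : Fin N → E) (w : Fin N → k), Set.range z ⊆ s ∧ AffineIndependent k z ∧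
      (∀ i, 0 < w i) ∧ ∑ i, w i = 1 ∧ ∑ i, w i • z i = x := by
  obtain ⟨ι, _, z, w, hzs, hz, hw, hw1, hwz⟩ := eq_pos_convex_span_of_mem_convexHull hx
  let e := (Fintype.equivFin ι).symm
  refine ⟨_, z ∘ e, w ∘ e, (Set.range_comp_subset_range _ _).trans hzs,
    hz.comp_embedding e.toEmbedding, fun i => hw _, ?_, ?_⟩
  · rwa [Function.comp_def, e.sum_comp w]
  · simpa only [Function.comp_apply] using (e.sum_comp fun i => w i • z i).trans hwz

theorem AffineIndependent.card_le_finrank_of_forall_eq_one [FiniteDimensional k E]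
    {ι : Type*} [Fintype ι] {p : ι → E} (hp : AffineIndependent k p) (ℓ : Module.Dual k E)
    (hℓ : ∀ i, ℓ (p i) = 1) : Fintype.card ι ≤ Module.finrank k E := by
  cases isEmpty_or_nonempty ι with
  | inl _ => simp
  | inr h =>
    obtain ⟨i₀⟩ := h
    have hℓ0 : ℓ ≠ 0 := fun h => by simpa [h] using hℓ i₀
    have hspan : vectorSpan k (Set.range p) ≤ LinearMap.ker ℓ := by
      rw [vectorSpan_def, Submodule.span_le]
      rintro _ ⟨_, ⟨i, rfl⟩, _, ⟨j, rfl⟩, rfl⟩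
      simp [hℓ]
    calc Fintype.card ι ≤ Module.finrank k (vectorSpan k (Set.range p)) + 1 :=
          hp.card_le_finrank_succ
      _ ≤ Module.finrank k (LinearMap.ker ℓ) + 1 := by
          gcongr; exact Submodule.finrank_mono hspan
      _ = Module.finrank k E := ℓ.finrank_ker_add_one_of_ne_zero hℓ0

end Caratheodory

section ConvexHull

variable {E : Type*} [AddCommGroup E] [Module ℝ E] [FiniteDimensional ℝ E]

theorem convexHull_eq_biUnion_image_stdSimplex (s : Set E) :
    convexHull ℝ s = ⋃ N ∈ Set.Iic (Module.finrank ℝ E + 1),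
      (fun q : (Fin N → ℝ) × (Fin N → E) => ∑ i, q.1 i • q.2 i) ''
        (stdSimplex ℝ (Fin N) ×ˢ Set.univ.pi fun _ => s) := by
  apply subset_antisymm
  · intro x hx
    obtain ⟨N, z, w, hzs, hz, hw, hw1, rfl⟩ := eq_pos_convex_span_fin_of_mem_convexHull hx
    refine Set.mem_biUnion ?_ ⟨(w, z), ⟨⟨fun i => (hw i).le, hw1⟩, fun i _ => hzs ⟨i, rfl⟩⟩, rfl⟩
    simpa using hz.card_le_finrank_succ.trans (by gcongr; exact Submodule.finrank_le _)
  · simp only [Set.iUnion_subset_iff, Set.image_subset_iff]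
    rintro N - ⟨w, z⟩ ⟨⟨hw0, hw1⟩, hz⟩
    exact (convex_convexHull ℝ s).sum_mem (fun i _ => hw0 i) hw1
      fun i _ => subset_convexHull ℝ s (hz i trivial)

theorem IsCompact.convexHull [TopologicalSpace E] [ContinuousAdd E] [ContinuousSMul ℝ E]
    {s : Set E} (hs : IsCompact s) : IsCompact (convexHull ℝ s) := by
  rw [convexHull_eq_biUnion_image_stdSimplex]
  refine (Set.finite_Iic _).isCompact_biUnion fun N _ => ?_
  exact ((isCompact_stdSimplex ℝ _).prod (isCompact_univ_pi fun _ => hs)).image (by fun_prop)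

end ConvexHull

section Quadrature

variable {X : Type*} [TopologicalSpace X] [MeasurableSpace X] [OpensMeasurableSpace X]
  {μ : Measure X} [IsFiniteMeasure μ] {K : Set X}

theorem Continuous.integrable_of_ae_mem_isCompact {E : Type*} [NormedAddCommGroup E]
    [SecondCountableTopologyEither X E] {g : X → E} (hg : Continuous g) (hK : IsCompact K)
    (hae : ∀ᵐ t ∂μ, t ∈ K) : Integrable g μ := by
  obtain ⟨C, hC⟩ := hK.exists_bound_of_continuousOn hg.continuousOn
  exact (integrable_const C).mono' hg.aestronglyMeasurable (hae.mono hC)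

variable {E : Type*} [NormedAddCommGroup E] [NormedSpace ℝ E] [FiniteDimensional ℝ E]

theorem average_mem_convexHull_image [NeZero μ] (hK : IsCompact K) (hae : ∀ᵐ t ∂μ, t ∈ K)
    {g : X → E} (hg : Continuous g) : ⨍ t, g t ∂μ ∈ convexHull ℝ (g '' K) :=
  (convex_convexHull ℝ _).average_mem (hK.image hg).convexHull.isClosed
    (hae.mono fun t ht => subset_convexHull ℝ _ ⟨t, ht, rfl⟩)
    (hg.integrable_of_ae_mem_isCompact hK hae)

theorem exists_integral_eq_sum_smul (hK : IsCompact K) (hae : ∀ᵐ t ∂μ, t ∈ K) {g : X → E}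
    (hg : Continuous g) (ℓ : Module.Dual ℝ E) (hℓ : ∀ x ∈ K, ℓ (g x) = 1) :
    ∃ N ≤ Module.finrank ℝ E, ∃ (x : Fin N → X) (ρ : Fin N → ℝ),
      (∀ k, x k ∈ K) ∧ (∀ k, 0 < ρ k) ∧ ∫ t, g t ∂μ = ∑ k, ρ k • g (x k) := by
  rcases eq_zero_or_neZero μ with rfl | _
  · exact ⟨0, Nat.zero_le _, Fin.elim0, Fin.elim0, (·.elim0), (·.elim0), by simp⟩
  obtain ⟨N, z, w, hzs, hz, hw, -, hwz⟩ :=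
    eq_pos_convex_span_fin_of_mem_convexHull (average_mem_convexHull_image hK hae hg)
  choose x hxK hgx using fun k => hzs ⟨k, rfl⟩
  have hN : N ≤ Module.finrank ℝ E := by
    simpa using hz.card_le_finrank_of_forall_eq_one ℓ fun k => hgx k ▸ hℓ _ (hxK k)
  refine ⟨N, hN, x, fun k => μ.real Set.univ * w k, hxK,
    fun k => mul_pos measureReal_univ_pos (hw k), ?_⟩
  simp only [mul_smul, ← Finset.smul_sum, hgx, hwz]
  rw [average_eq, smul_inv_smul₀ measureReal_univ_ne_zero]

theorem exists_quadrature_of_finiteDimensional (hK : IsCompact K) (hae : ∀ᵐ t ∂μ, t ∈ K)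
    (V : Submodule ℝ (X → ℝ)) [FiniteDimensional ℝ V] (hV : ∀ f ∈ V, Continuous f)
    (hone : 1 ∈ V) :
    ∃ N ≤ Module.finrank ℝ V, ∃ (x : Fin N → X) (ρ : Fin N → ℝ),
      (∀ k, x k ∈ K) ∧ (∀ k, 0 < ρ k) ∧ ∀ f ∈ V, ∫ t, f t ∂μ = ∑ k, ρ k * f (x k) := by
  let B := Module.finBasis ℝ V
  let g : X → Fin (Module.finrank ℝ V) → ℝ := fun t i => (B i : X → ℝ) t
  have hg : Continuous g := continuous_pi fun i => hV _ (B i).2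
  have hcoord : ∀ f ∈ V, ∃ L : (Fin (Module.finrank ℝ V) → ℝ) →L[ℝ] ℝ, ∀ t, L (g t) = f t := by
    intro f hf
    refine ⟨∑ i, B.repr ⟨f, hf⟩ i • ContinuousLinearMap.proj i, fun t => ?_⟩
    have := congrFun (congrArg Subtype.val (B.sum_repr ⟨f, hf⟩)) t
    simpa only [Submodule.coe_sum, Submodule.coe_smul, Finset.sum_apply, Pi.smul_apply,
      smul_eq_mul, FunLike.coe_sum, FunLike.coe_smul,
      ContinuousLinearMap.proj_apply] using this
  obtain ⟨ℓ, hℓ⟩ := hcoord 1 hone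
  obtain ⟨N, hN, x, ρ, hxK, hρ, hint⟩ :=
    exists_integral_eq_sum_smul hK hae hg (ℓ : Module.Dual ℝ _) fun t _ => hℓ t
  refine ⟨N, hN.trans_eq (Module.finrank_fin_fun ℝ), x, ρ, hxK, hρ, fun f hf => ?_⟩
  obtain ⟨L, hL⟩ := hcoord f hf
  calc ∫ t, f t ∂μ = ∫ t, L (g t) ∂μ := by simp only [hL]
    _ = L (∫ t, g t ∂μ) := L.integral_comp_comm (hg.integrable_of_ae_mem_isCompact hK hae)
    _ = ∑ k, ρ k * f (x k) := by simp [hint, hL]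

end Quadrature

theorem tchakaloff_compact_general (d m : ℕ)
    (μ : Measure (Fin d → ℝ)) [IsFiniteMeasure μ]
    (hK : IsCompact (msupport μ)) :
    ∃ N ≤ Module.finrank ℝ (restrictTotalDegree (Fin d) ℝ m),
      ∃ (x : Fin N → (Fin d → ℝ)) (ρ : Fin N → ℝ),
        (∀ k, x k ∈ msupport μ) ∧ (∀ k, 0 < ρ k) ∧
        ∀ p : MvPolynomial (Fin d) ℝ, p.totalDegree ≤ m →
          ∫ t, eval t p ∂μ = ∑ k, ρ k * eval (x k) p := by
  let V := (restrictTotalDegree (Fin d) ℝ m).map (evalₗ ℝ (Fin d))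
  have hV : ∀ f ∈ V, Continuous f := by
    rintro _ ⟨p, -, rfl⟩
    exact p.continuous_eval
  have hone : 1 ∈ V := ⟨1, (mem_restrictTotalDegree _ _ _).2 (by simp), by ext; simp⟩
  have hae : ∀ᵐ t ∂μ, t ∈ msupport μ := msupport_eq_support μ ▸ Measure.support_mem_ae
  obtain ⟨N, hN, x, ρ, hx, hρ, hquad⟩ := exists_quadrature_of_finiteDimensional hK hae V hV hone
  refine ⟨N, hN.trans (Submodule.finrank_map_le _ _), x, ρ, hx, hρ, fun p hp => ?_⟩
  exact hquad _ ⟨p, (mem_restrictTotalDegree _ _ _).2 hp, rfl⟩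

/-- Tchakaloff's theorem (Putinar's version for compact support): a positive finite
Borel measure with compact support in `ℝ^d` admits a quadrature rule of any degree `m > 0`
with size at most `dim ℝ_m[t₁,…,t_d]`. -/
theorem tchakaloff_compact (d m : ℕ) (hm : 0 < m)
    (μ : Measure (Fin d → ℝ)) [IsFiniteMeasure μ]
    (hK : IsCompact (msupport μ)) :
    ∃ N ≤ Module.finrank ℝ (restrictTotalDegree (Fin d) ℝ m),
      ∃ (x : Fin N → (Fin d → ℝ)) (ρ : Fin N → ℝ),
        (∀ k, x k ∈ msupport μ) ∧ (∀ k, 0 < ρ k) ∧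
        ∀ p : MvPolynomial (Fin d) ℝ, p.totalDegree ≤ m →
          ∫ t, eval t p ∂μ = ∑ k, ρ k * eval (x k) p :=
  tchakaloff_compact_general d m μ hK
end

section
/- Let F be a nonempty closed subset of ℂ^d, ρ : F → [0,∞) continuous, and suppose {z ∈ F : ρ(z) ≤ r} is compact for some r > 0. Let (μ_w) be a net of finite positive Borel measures on F converging to a finite positive Borel measure μ in the sense that ∫ f dμ_w → ∫ f dμ for all f ∈ C_c(F), and suppose sup_w ∫ ρ dμ_w < ∞. Then for every continuous f : F → ℂ with f/(1+ρ) vanishing at infinity on F, one has ∫ f dμ_w → ∫ f dμ. -/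
/-!
Up to an error `δ (1 + ρ)`, a continuous `f = o(1 + ρ)` at infinity is the compactly supported
function `χ f`, where `χ` is a Urysohn cutoff equal to `1` on a large compact set. It therefore
suffices that `∫ (1 + ρ) dμ_w` is eventually bounded and that `∫ (1 + ρ) dμ` is finite. The first
holds because vague convergence bounds the mass of the compact set `{ρ ≤ r}` and Markov's
inequality bounds the mass of its complement by `sup_w ∫ ρ dμ_w / r`. The second holds because
`∫ ρ dμ` is the supremum of `∫ χ ρ dμ` over cutoffs `χ`, and each of these is a limit of
integrals `∫ χ ρ dμ_w ≤ sup_w ∫ ρ dμ_w`.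
-/

open MeasureTheory Filter Topology Asymptotics Set
open scoped ENNReal

noncomputable instance (d : ℕ) : MeasurableSpace (EuclideanSpace ℂ (Fin d)) := borel _
instance (d : ℕ) : BorelSpace (EuclideanSpace ℂ (Fin d)) := ⟨rfl⟩

theorem tendsto_of_forall_approx {α E : Type*} [PseudoMetricSpace E] {l : Filter α}
    {u : α → E} {a : E}
    (h : ∀ ε > 0, ∃ v : α → E, ∃ b, Tendsto v l (𝓝 b) ∧ (∀ᶠ i in l, dist (u i) (v i) ≤ ε) ∧
      dist b a ≤ ε) :
    Tendsto u l (𝓝 a) := by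
  refine Metric.tendsto_nhds.2 fun ε hε => ?_
  obtain ⟨v, b, hvb, huv, hba⟩ := h (ε / 4) (by positivity)
  filter_upwards [huv, Metric.tendsto_nhds.1 hvb (ε / 4) (by positivity)] with i hi hvi
  calc dist (u i) a ≤ dist (u i) (v i) + dist (v i) b + dist b a := dist_triangle4 _ _ _ _
    _ < ε := by linarith

theorem exists_hasCompactSupport_norm_sub_le {X E : Type*} [TopologicalSpace X] [T2Space X]
    [LocallyCompactSpace X] [NormedAddCommGroup E] [NormedSpace ℝ E] {f : X → E} (hf : Continuous f) {w : X → ℝ} (hw0 : 0 ≤ w)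
    (hfw : ∀ᶠ x in cocompact X, ‖f x‖ ≤ w x) :
    ∃ φ : X → E, Continuous φ ∧ HasCompactSupport φ ∧ ∀ x, ‖f x - φ x‖ ≤ w x := by
  obtain ⟨K, hK, hKf⟩ := (hasBasis_cocompact.mem_iff).1 hfw
  obtain ⟨χ, hχK, -, hχc, hχ01⟩ :=
    exists_continuous_one_zero_of_isCompact hK isClosed_empty (disjoint_empty K)
  refine ⟨fun x => χ x • f x, χ.continuous.smul hf, hχc.smul_right, fun x => ?_⟩
  have hsub : f x - χ x • f x = (1 - χ x) • f x := by rw [sub_smul, one_smul]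
  rw [hsub, norm_smul, Real.norm_of_nonneg (sub_nonneg.2 (hχ01 x).2)]
  by_cases hx : x ∈ K
  · simpa [hχK hx] using hw0 x
  · calc (1 - χ x) * ‖f x‖ ≤ 1 * ‖f x‖ := by gcongr; linarith [(hχ01 x).1]
      _ ≤ w x := by simpa using hKf hx

theorem integrable_and_integral_le_of_lintegral_le {X : Type*} [MeasurableSpace X]
    {μ : Measure X} {w : X → ℝ} (hw : AEStronglyMeasurable w μ) (hw0 : 0 ≤ᵐ[μ] w) {C : ℝ≥0∞}
    (hC : C ≠ ∞) (hwC : ∫⁻ x, ENNReal.ofReal (w x) ∂μ ≤ C) :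
    Integrable w μ ∧ ∫ x, w x ∂μ ≤ C.toReal := by
  refine ⟨⟨hw, (hasFiniteIntegral_iff_ofReal hw0).2 (hwC.trans_lt hC.lt_top)⟩, ?_⟩
  rw [integral_eq_lintegral_of_nonneg_ae hw0 hw]
  exact ENNReal.toReal_mono hC hwC

section

variable {X : Type*} [TopologicalSpace X] [MeasurableSpace X] [OpensMeasurableSpace X]

theorem dist_integral_le_of_norm_sub_le {E : Type*} [NormedAddCommGroup E] [NormedSpace ℝ E]
    [SecondCountableTopologyEither X E] {μ : Measure X} [IsFiniteMeasureOnCompacts μ]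
    {f φ : X → E} {w : X → ℝ} (hf : Continuous f) (hφ : Continuous φ) (hφc : HasCompactSupport φ)
    (hw : Integrable w μ) (hfφ : ∀ x, ‖f x - φ x‖ ≤ w x) :
    dist (∫ x, f x ∂μ) (∫ x, φ x ∂μ) ≤ ∫ x, w x ∂μ := by
  have hφi := hφ.integrable_of_hasCompactSupport hφc (μ := μ)
  have hfφi : Integrable (fun x => f x - φ x) μ :=
    hw.mono' (hf.sub hφ).aestronglyMeasurable (ae_of_all _ hfφ)
  have hfi : Integrable f μ :=
    (hfφi.add hφi).congr (ae_of_all _ fun x => sub_add_cancel (f x) (φ x))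
  rw [dist_eq_norm, ← integral_sub hfi hφi]
  exact norm_integral_le_of_norm_le hw (ae_of_all _ hfφ)

variable [T2Space X] [LocallyCompactSpace X]

theorem lintegral_ofReal_le_of_forall_hasCompactSupport [SigmaCompactSpace X] {μ : Measure X}
    {ρ : X → ℝ} (hρ : Continuous ρ) (hρ0 : 0 ≤ ρ) {C : ℝ≥0∞}
    (h : ∀ g : X → ℝ, Continuous g → HasCompactSupport g → 0 ≤ g → g ≤ ρ →
      ∫⁻ x, ENNReal.ofReal (g x) ∂μ ≤ C) :
    ∫⁻ x, ENNReal.ofReal (ρ x) ∂μ ≤ C := by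
  have hmono : Monotone (compactCovering X) := fun _ _ h => compactCovering_subset X h
  rw [← setLIntegral_univ, ← iUnion_compactCovering,
    setLIntegral_iUnion_of_directed _ hmono.directed_le]
  refine iSup_le fun n => ?_
  obtain ⟨χ, hχK, -, hχc, hχ01⟩ := exists_continuous_one_zero_of_isCompact
    (isCompact_compactCovering X n) isClosed_empty (disjoint_empty _)
  calc ∫⁻ x in compactCovering X n, ENNReal.ofReal (ρ x) ∂μ
      = ∫⁻ x in compactCovering X n, ENNReal.ofReal (χ x * ρ x) ∂μ :=
        setLIntegral_congr_fun (isCompact_compactCovering X n).measurableSet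
          fun x hx => by simp [hχK hx]
    _ ≤ ∫⁻ x, ENNReal.ofReal (χ x * ρ x) ∂μ := setLIntegral_le_lintegral _ _
    _ ≤ C := h _ (χ.continuous.mul hρ) hχc.mul_right (fun x => mul_nonneg (hχ01 x).1 (hρ0 x))
        fun x => mul_le_of_le_one_left (hρ0 x) (hχ01 x).2

end

def TendstoVaguely {X ι : Type*} [TopologicalSpace X] [MeasurableSpace X] (μs : ι → Measure X)
    (l : Filter ι) (μ : Measure X) : Prop :=
  ∀ f : X → ℂ, Continuous f → HasCompactSupport f →
    Tendsto (fun i => ∫ x, f x ∂(μs i)) l (𝓝 (∫ x, f x ∂μ))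

namespace TendstoVaguely

variable {X ι : Type*} [TopologicalSpace X] [MeasurableSpace X]
  {μs : ι → Measure X} {l : Filter ι} {μ : Measure X}

theorem tendsto_integral_real (h : TendstoVaguely μs l μ) {g : X → ℝ} (hg : Continuous g)
    (hgc : HasCompactSupport g) :
    Tendsto (fun i => ∫ x, g x ∂(μs i)) l (𝓝 (∫ x, g x ∂μ)) := by
  have := (Complex.continuous_re.tendsto _).comp
    (h (fun x => (g x : ℂ)) (Complex.continuous_ofReal.comp hg) (hgc.comp_left Complex.ofReal_zero))
  simpa only [Function.comp_def, integral_complex_ofReal, Complex.ofReal_re] using this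

variable [OpensMeasurableSpace X] [∀ i, IsFiniteMeasureOnCompacts (μs i)]

theorem eventually_measure_univ_le [T2Space X] [LocallyCompactSpace X]
    (h : TendstoVaguely μs l μ) {ρ : X → ℝ} (hρ : Measurable ρ) {r : ℝ} (hr : 0 < r)
    (hK : IsCompact {x | ρ x ≤ r}) {C : ℝ≥0∞} (hC : C ≠ ∞)
    (hρC : ∀ᶠ i in l, ∫⁻ x, ENNReal.ofReal (ρ x) ∂(μs i) ≤ C) :
    ∃ M : ℝ≥0∞, M ≠ ∞ ∧ ∀ᶠ i in l, μs i univ ≤ M := by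
  obtain ⟨χ, hχK, -, hχc, hχ01⟩ :=
    exists_continuous_one_zero_of_isCompact hK isClosed_empty (disjoint_empty _)
  refine ⟨ENNReal.ofReal (∫ x, χ x ∂μ + 1) + C / ENNReal.ofReal r,
    ENNReal.add_ne_top.2 ⟨ENNReal.ofReal_ne_top, ENNReal.div_ne_top hC (by simpa using hr)⟩, ?_⟩
  filter_upwards [hρC, (h.tendsto_integral_real χ.continuous hχc).eventually_le_const
    (lt_add_one _)] with i hiC hiχ
  have hinside : μs i {x | ρ x ≤ r} ≤ ENNReal.ofReal (∫ x, χ x ∂μ + 1) := calc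
    μs i {x | ρ x ≤ r} = ∫⁻ x in {x | ρ x ≤ r}, ENNReal.ofReal (χ x) ∂(μs i) := by
      rw [← setLIntegral_one]
      exact setLIntegral_congr_fun hK.measurableSet fun x hx => by simp [hχK hx]
    _ ≤ ∫⁻ x, ENNReal.ofReal (χ x) ∂(μs i) := setLIntegral_le_lintegral _ _
    _ = ENNReal.ofReal (∫ x, χ x ∂(μs i)) := (ofReal_integral_eq_lintegral_ofReal
        (χ.continuous.integrable_of_hasCompactSupport hχc) (ae_of_all _ fun x => (hχ01 x).1)).symm
    _ ≤ _ := ENNReal.ofReal_le_ofReal hiχ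
  have houtside : μs i {x | ρ x ≤ r}ᶜ ≤ C / ENNReal.ofReal r := calc
    μs i {x | ρ x ≤ r}ᶜ ≤ μs i {x | ENNReal.ofReal r ≤ ENNReal.ofReal (ρ x)} :=
      measure_mono fun x (hx : ¬ρ x ≤ r) => ENNReal.ofReal_le_ofReal (lt_of_not_ge hx).le
    _ ≤ (∫⁻ x, ENNReal.ofReal (ρ x) ∂(μs i)) / ENNReal.ofReal r :=
      meas_ge_le_lintegral_div (ENNReal.measurable_ofReal.comp hρ).aemeasurable
        (by simpa using hr) ENNReal.ofReal_ne_top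
    _ ≤ C / ENNReal.ofReal r := by gcongr
  exact (measure_univ_le_add_compl _).trans (add_le_add hinside houtside)

theorem lintegral_ofReal_le [T2Space X] [LocallyCompactSpace X] [SigmaCompactSpace X]
    [IsFiniteMeasureOnCompacts μ] [l.NeBot] (h : TendstoVaguely μs l μ) {ρ : X → ℝ}
    (hρ : Continuous ρ) (hρ0 : 0 ≤ ρ) {C : ℝ≥0∞}
    (hρC : ∀ᶠ i in l, ∫⁻ x, ENNReal.ofReal (ρ x) ∂(μs i) ≤ C) :
    ∫⁻ x, ENNReal.ofReal (ρ x) ∂μ ≤ C := by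
  refine lintegral_ofReal_le_of_forall_hasCompactSupport hρ hρ0 fun g hg hgc hg0 hgρ => ?_
  have hlint : ∀ ν : Measure X, [IsFiniteMeasureOnCompacts ν] →
      ENNReal.ofReal (∫ x, g x ∂ν) = ∫⁻ x, ENNReal.ofReal (g x) ∂ν := fun ν _ =>
    ofReal_integral_eq_lintegral_ofReal (hg.integrable_of_hasCompactSupport hgc) (ae_of_all _ hg0)
  rw [← hlint]
  refine le_of_tendsto ((ENNReal.continuous_ofReal.tendsto _).comp
    (h.tendsto_integral_real hg hgc)) ?_
  filter_upwards [hρC] with i hi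
  rw [Function.comp_apply, hlint]
  exact (lintegral_mono fun x => ENNReal.ofReal_le_ofReal (hgρ x)).trans hi

theorem tendsto_integral_of_isLittleO [T2Space X] [LocallyCompactSpace X] [SigmaCompactSpace X]
    [IsFiniteMeasureOnCompacts μ] [l.NeBot] (h : TendstoVaguely μs l μ) {w : X → ℝ}
    (hw : Continuous w) (hw0 : 0 ≤ w) {C : ℝ≥0∞} (hC : C ≠ ∞)
    (hwC : ∀ᶠ i in l, ∫⁻ x, ENNReal.ofReal (w x) ∂(μs i) ≤ C) {f : X → ℂ} (hf : Continuous f)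
    (hfw : f =o[cocompact X] w) :
    Tendsto (fun i => ∫ x, f x ∂(μs i)) l (𝓝 (∫ x, f x ∂μ)) := by
  refine tendsto_of_forall_approx fun ε hε => ?_
  obtain ⟨δ, hδ, hδC⟩ : ∃ δ > 0, δ * C.toReal ≤ ε := by
    have hC1 : 0 < C.toReal + 1 := by positivity
    refine ⟨ε / (C.toReal + 1), by positivity, ?_⟩
    calc ε / (C.toReal + 1) * C.toReal ≤ ε / (C.toReal + 1) * (C.toReal + 1) := by
          gcongr; linarith
      _ = ε := div_mul_cancel₀ _ hC1.ne'
  obtain ⟨φ, hφ, hφc, hfφ⟩ := exists_hasCompactSupport_norm_sub_le hf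
    (fun x => mul_nonneg hδ.le (hw0 x))
    ((hfw.def hδ).mono fun x hx => by rwa [Real.norm_of_nonneg (hw0 x)] at hx)
  have hclose : ∀ ν : Measure X, [IsFiniteMeasureOnCompacts ν] →
      ∫⁻ x, ENNReal.ofReal (w x) ∂ν ≤ C → dist (∫ x, f x ∂ν) (∫ x, φ x ∂ν) ≤ ε := by
    intro ν _ hνC
    obtain ⟨hwν, hwνC⟩ := integrable_and_integral_le_of_lintegral_le hw.aestronglyMeasurable
      (ae_of_all _ hw0) hC hνC
    calc dist (∫ x, f x ∂ν) (∫ x, φ x ∂ν) ≤ ∫ x, δ * w x ∂ν :=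
          dist_integral_le_of_norm_sub_le hf hφ hφc (hwν.const_mul δ) hfφ
      _ = δ * ∫ x, w x ∂ν := integral_const_mul _ _
      _ ≤ δ * C.toReal := by gcongr
      _ ≤ ε := hδC
  refine ⟨fun i => ∫ x, φ x ∂(μs i), ∫ x, φ x ∂μ, h φ hφ hφc,
    hwC.mono fun i => hclose (μs i), ?_⟩
  rw [dist_comm]
  exact hclose μ (h.lintegral_ofReal_le hw hw0 hwC)

end TendstoVaguely

theorem stochel_convergence_general (d : ℕ) (F : Set (EuclideanSpace ℂ (Fin d)))
    (hFc : IsClosed F)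
    {ι : Type*} [Preorder ι] [IsDirected ι (· ≤ ·)] [Nonempty ι]
    (μw : ι → Measure ↥F) (μ : Measure ↥F)
    [∀ w, IsFiniteMeasure (μw w)] [IsFiniteMeasure μ]
    (ρ : ↥F → ℝ) (hρc : Continuous ρ) (hρ0 : ∀ x, 0 ≤ ρ x)
    (r : ℝ) (hr : 0 < r) (hlevel : IsCompact {x : ↥F | ρ x ≤ r})
    (hconv : ∀ f : ↥F → ℂ, Continuous f → HasCompactSupport f →
      Filter.Tendsto (fun w => ∫ x, f x ∂(μw w)) Filter.atTop (nhds (∫ x, f x ∂μ)))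
    (hsup : (⨆ w, ∫⁻ x, ENNReal.ofReal (ρ x) ∂(μw w)) < ⊤)
    (f : ↥F → ℂ) (hf : Continuous f)
    (hvanish : Filter.Tendsto (fun x : ↥F => f x / ((1 + ρ x : ℝ) : ℂ))
      (Filter.cocompact ↥F) (nhds 0)) :
    Filter.Tendsto (fun w => ∫ x, f x ∂(μw w)) Filter.atTop (nhds (∫ x, f x ∂μ)) := by
  have : LocallyCompactSpace F := hFc.isClosedEmbedding_subtypeVal.locallyCompactSpace
  have hvague : TendstoVaguely μw atTop μ := hconv
  set C := ⨆ w, ∫⁻ x, ENNReal.ofReal (ρ x) ∂(μw w)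
  have hρC : ∀ᶠ w in atTop, ∫⁻ x, ENNReal.ofReal (ρ x) ∂(μw w) ≤ C := .of_forall (le_iSup _)
  obtain ⟨M, hM, hmass⟩ := hvague.eventually_measure_univ_le hρc.measurable hr hlevel hsup.ne hρC
  have hweight : ∀ᶠ w in atTop, ∫⁻ x, ENNReal.ofReal (1 + ρ x) ∂(μw w) ≤ M + C := by
    filter_upwards [hmass, hρC] with w hwM hwC
    simp_rw [ENNReal.ofReal_add zero_le_one (hρ0 _), ENNReal.ofReal_one]
    rw [lintegral_add_left measurable_const, lintegral_one]
    exact add_le_add hwM hwC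
  have hfo : f =o[cocompact F] fun x => 1 + ρ x := by
    refine ((isLittleO_iff_tendsto fun x hx => ?_).2 hvanish).trans_isBigO
      (isBigO_of_le _ fun x => (Complex.norm_real _).le)
    exact absurd hx (by exact_mod_cast (add_pos_of_pos_of_nonneg one_pos (hρ0 x)).ne')
  exact hvague.tendsto_integral_of_isLittleO (continuous_const.add hρc)
    (fun x => add_nonneg zero_le_one (hρ0 x)) (ENNReal.add_ne_top.2 ⟨hM, hsup.ne⟩) hweight hf hfo

/-- Stochel's convergence result: with `F ⊆ ℂ^d` nonempty closed, `ρ ≥ 0` continuous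
with some compact sublevel set `{ρ ≤ r}`, `r > 0`, if the net `μ_w` of finite positive
Borel measures converges to the finite positive Borel measure `μ` against all continuous
compactly supported functions and `sup_w ∫ ρ dμ_w < ∞`, then `∫ f dμ_w → ∫ f dμ` for
every continuous `f : F → ℂ` such that `f/(1+ρ)` vanishes at infinity on `F`. -/
theorem stochel_convergence (d : ℕ) (F : Set (EuclideanSpace ℂ (Fin d)))
    (hFc : IsClosed F) (hFne : F.Nonempty)
    {ι : Type*} [Preorder ι] [IsDirected ι (· ≤ ·)] [Nonempty ι]
    (μw : ι → Measure ↥F) (μ : Measure ↥F)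
    [∀ w, IsFiniteMeasure (μw w)] [IsFiniteMeasure μ]
    (ρ : ↥F → ℝ) (hρc : Continuous ρ) (hρ0 : ∀ x, 0 ≤ ρ x)
    (r : ℝ) (hr : 0 < r) (hlevel : IsCompact {x : ↥F | ρ x ≤ r})
    (hconv : ∀ f : ↥F → ℂ, Continuous f → HasCompactSupport f →
      Filter.Tendsto (fun w => ∫ x, f x ∂(μw w)) Filter.atTop (nhds (∫ x, f x ∂μ)))
    (hsup : (⨆ w, ∫⁻ x, ENNReal.ofReal (ρ x) ∂(μw w)) < ⊤)
    (f : ↥F → ℂ) (hf : Continuous f)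
    (hvanish : Filter.Tendsto (fun x : ↥F => f x / ((1 + ρ x : ℝ) : ℂ))
      (Filter.cocompact ↥F) (nhds 0)) :
    Filter.Tendsto (fun w => ∫ x, f x ∂(μw w)) Filter.atTop (nhds (∫ x, f x ∂μ)) :=
  stochel_convergence_general d F hFc μw μ ρ hρc hρ0 r hr hlevel hconv hsup f hf hvanish
end

section
/- Let μ be a representing measure for a flat truncated moment sequence γ^{(2n)} (M(n) ≥ 0, rank M(n) = rank M(n−1)). Then ∫ |z|^{2n+2} dμ(z) < ∞; in particular μ has convergent moments up to degree 2n+2. -/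
open MeasureTheory
open scoped ComplexOrder

noncomputable instance : MeasurableSpace ℂ := borel _
instance : BorelSpace ℂ := ⟨rfl⟩

/-- Index set for the moment matrix `M(n)`: pairs `(i, j)` with `i + j ≤ n`. -/
def MomIdx (n : ℕ) := {p : Fin (n + 1) × Fin (n + 1) // (p.1 : ℕ) + (p.2 : ℕ) ≤ n}

instance (n : ℕ) : Fintype (MomIdx n) := by unfold MomIdx; infer_instance

/-- The moment matrix `M(n)(γ)`. -/
noncomputable def momentMatrix (n : ℕ) (γ : ℕ → ℕ → ℂ) : Matrix (MomIdx n) (MomIdx n) ℂ :=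
  fun r c => γ ((r.1.1 : ℕ) + (c.1.2 : ℕ)) ((r.1.2 : ℕ) + (c.1.1 : ℕ))

/-- `μ` is a representing measure for the truncated moment sequence `γ^{(2n)}`. -/
def IsRepr (n : ℕ) (γ : ℕ → ℕ → ℂ) (μ : Measure ℂ) : Prop :=
  ∀ i j : ℕ, i + j ≤ 2 * n →
    Integrable (fun z : ℂ => (starRingEnd ℂ) z ^ i * z ^ j) μ ∧
    ∫ z, (starRingEnd ℂ) z ^ i * z ^ j ∂μ = γ i j

open Matrix Submodule
open scoped ComplexConjugate InnerProductSpace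

/-! The moment matrix `M(n)` is the Gram matrix of the monomials `z^a z̄^b` (`a + b ≤ n`) in
`L²(μ)`. Flatness puts the column of `z̄^n` in the span of the columns of degree `≤ n - 1`, and a
linear relation between the columns of a Gram matrix is a relation between the vectors
themselves: `z̄^n = p(z, z̄)` in `L²(μ)` with `deg p ≤ n - 1`. Hence `|z|^(n+1) = |z p(z, z̄)|`
μ-a.e., and `z p(z, z̄)` is a combination of monomials of degree `≤ n`, so it lies in `L²(μ)`. -/

namespace Matrix

theorem col_mem_span_col_comp_of_rank_submatrix_eq {K m n m₀ κ : Type*} [Field K] [Fintype n]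
    [Fintype κ] (A : Matrix m n K) (g : m₀ → m) (f : κ → n)
    (h : A.rank = (A.submatrix g f).rank) (j : n) :
    A.col j ∈ span K (Set.range (A.col ∘ f)) := by
  have hspan : span K (Set.range (A.col ∘ f)) = span K (Set.range A.col) := by
    have := Module.Finite.span_of_finite K (Set.finite_range A.col)
    refine eq_of_le_of_finrank_le (span_mono (Set.range_comp_subset_range _ _)) ?_
    calc Module.finrank K (span K (Set.range A.col))
        = A.rank := (rank_eq_finrank_span_cols A).symm
      _ = ((A.submatrix id f).submatrix g id).rank := h
      _ ≤ (A.submatrix id f).rank := rank_submatrix_le _ g id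
      _ = _ := rank_eq_finrank_span_cols _
  exact hspan ▸ subset_span ⟨j, rfl⟩

theorem eq_sum_smul_of_gram_col_eq {𝕜 E n κ : Type*} [RCLike 𝕜] [NormedAddCommGroup E]
    [InnerProductSpace 𝕜 E] [Fintype κ] {v : n → E} {t : n} {f : κ → n} {c : κ → 𝕜}
    (h : (gram 𝕜 v).col t = ∑ s, c s • (gram 𝕜 v).col (f s)) :
    v t = ∑ s, c s • v (f s) := by
  set w := v t - ∑ s, c s • v (f s)
  have hw : ∀ i, ⟪v i, w⟫_𝕜 = 0 := fun i => by
    have := congr_fun h i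
    simp only [col_apply, gram_apply, Finset.sum_apply, Pi.smul_apply, smul_eq_mul] at this
    simp [w, inner_sub_right, inner_sum, inner_smul_right, this]
  have hww : ⟪v t - ∑ s, c s • v (f s), w⟫_𝕜 = 0 := by
    simp [inner_sub_left, sum_inner, inner_smul_left, hw]
  exact sub_eq_zero.mp (inner_self_eq_zero.mp hww)

end Matrix

namespace MeasureTheory

variable {α 𝕜 : Type*} [RCLike 𝕜] [MeasurableSpace α] {μ : Measure α}

theorem gram_toLp_apply {ι : Type*} {m : ι → α → 𝕜} (hm : ∀ i, MemLp (m i) 2 μ) (i j : ι) :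
    gram 𝕜 (fun i => (hm i).toLp (m i)) i j = ∫ x, conj (m i x) * m j x ∂μ := by
  rw [gram_apply, L2.inner_def]
  refine integral_congr_ae ?_
  filter_upwards [(hm i).coeFn_toLp, (hm j).coeFn_toLp] with x hi hj
  rw [hi, hj, RCLike.inner_apply']

theorem ae_eq_sum_smul_of_toLp_eq_sum_smul {E κ : Type*} [NormedAddCommGroup E]
    [NormedSpace 𝕜 E] {p : ENNReal} [Fintype κ] {f : α → E} {g : κ → α → E} {c : κ → 𝕜}
    (hf : MemLp f p μ) (hg : ∀ s, MemLp (g s) p μ)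
    (h : hf.toLp f = ∑ s, c s • (hg s).toLp (g s)) :
    f =ᵐ[μ] fun x => ∑ s, c s • g s x := by
  have hsmul : ∀ᵐ x ∂μ, ∀ s, (c s • (hg s).toLp (g s) : Lp E p μ) x = c s • g s x :=
    ae_all_iff.2 fun s => by
      filter_upwards [Lp.coeFn_smul (c s) ((hg s).toLp (g s)), (hg s).coeFn_toLp] with x h₁ h₂
      rw [h₁, Pi.smul_apply, h₂]
  filter_upwards [hf.coeFn_toLp, Lp.coeFn_fun_finsetSum Finset.univ
    (fun s => c s • (hg s).toLp (g s)), hsmul] with x hfx hsum hsx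
  rw [← hfx, h, hsum]
  exact Finset.sum_congr rfl fun s _ => hsx s

end MeasureTheory

namespace MomIdx

def monomial {n : ℕ} (r : MomIdx n) (z : ℂ) : ℂ := z ^ (r.1.1 : ℕ) * conj z ^ (r.1.2 : ℕ)

def castLE {m n : ℕ} (h : m ≤ n) (r : MomIdx m) : MomIdx n :=
  ⟨(r.1.1.castLE (by omega), r.1.2.castLE (by omega)), by simpa using r.2.trans h⟩

theorem monomial_castLE {m n : ℕ} (h : m ≤ n) (r : MomIdx m) :
    (r.castLE h).monomial = r.monomial := rfl

end MomIdx

theorem momentMatrix_submatrix_castLE {m n : ℕ} (h : m ≤ n) (γ : ℕ → ℕ → ℂ) :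
    (momentMatrix n γ).submatrix (MomIdx.castLE h) (MomIdx.castLE h) = momentMatrix m γ := rfl

namespace IsRepr

variable {n : ℕ} {γ : ℕ → ℕ → ℂ} {μ : Measure ℂ}

theorem integrable_norm_pow (hμ : IsRepr n γ μ) {k : ℕ} (hk : k ≤ 2 * n) :
    Integrable (fun z : ℂ => ‖z‖ ^ k) μ := by
  refine ((hμ 0 k (by omega)).1.norm).congr (Filter.Eventually.of_forall fun z => ?_)
  simp

theorem isFiniteMeasure (hμ : IsRepr n γ μ) : IsFiniteMeasure μ :=
  (integrable_const_iff_isFiniteMeasure one_ne_zero).1 (by simpa using (hμ 0 0 (Nat.zero_le _)).1)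

theorem memLp_pow_mul_conj_pow (hμ : IsRepr n γ μ) {a b : ℕ} (hab : a + b ≤ n) :
    MemLp (fun z : ℂ => z ^ a * conj z ^ b) 2 μ := by
  have hcont : Continuous fun z : ℂ => z ^ a * conj z ^ b := by fun_prop
  refine (memLp_two_iff_integrable_sq_norm hcont.aestronglyMeasurable).2 ?_
  refine (hμ.integrable_norm_pow (k := 2 * (a + b)) (by omega)).congr
    (Filter.Eventually.of_forall fun z => ?_)
  simp only [norm_mul, norm_pow, Complex.norm_conj]
  ring

theorem memLp_monomial (hμ : IsRepr n γ μ) (r : MomIdx n) : MemLp r.monomial 2 μ :=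
  hμ.memLp_pow_mul_conj_pow r.2

theorem momentMatrix_eq_gram (hμ : IsRepr n γ μ) :
    momentMatrix n γ = gram ℂ fun r => (hμ.memLp_monomial r).toLp r.monomial := by
  ext r c
  rw [gram_toLp_apply, momentMatrix, ← (hμ _ _ (by have := r.2; have := c.2; omega)).2]
  congr 1 with z
  simp only [MomIdx.monomial, map_mul, map_pow, Complex.conj_conj]
  ring

theorem exists_conj_pow_ae_eq_sum_monomial (hμ : IsRepr n γ μ)
    (hflat : (momentMatrix n γ).rank = (momentMatrix (n - 1) γ).rank) :
    ∃ c : MomIdx (n - 1) → ℂ, ∀ᵐ z ∂μ, conj z ^ n = ∑ s, c s * s.monomial z := by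
  set t : MomIdx n := ⟨(0, Fin.last n), by simp⟩
  have hcol := (momentMatrix n γ).col_mem_span_col_comp_of_rank_submatrix_eq
    (MomIdx.castLE (Nat.sub_le n 1)) (MomIdx.castLE (Nat.sub_le n 1))
    (by rw [momentMatrix_submatrix_castLE]; exact hflat) t
  obtain ⟨c, hc⟩ := (mem_span_range_iff_exists_fun ℂ).1 hcol
  rw [hμ.momentMatrix_eq_gram] at hc
  refine ⟨c, ?_⟩
  filter_upwards [ae_eq_sum_smul_of_toLp_eq_sum_smul _ _ (eq_sum_smul_of_gram_col_eq hc.symm)]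
    with z hz
  simp only [MomIdx.monomial_castLE, smul_eq_mul] at hz
  simpa [t, MomIdx.monomial] using hz

end IsRepr

theorem integrable_conj_pow_mul_pow_of_integrable_norm_pow {μ : Measure ℂ} [IsFiniteMeasure μ]
    {m i j : ℕ} (hm : Integrable (fun z : ℂ => ‖z‖ ^ m) μ) (hij : i + j ≤ m) :
    Integrable (fun z : ℂ => conj z ^ i * z ^ j) μ := by
  refine ((integrable_const 1).add hm).mono' (by fun_prop)
    (Filter.Eventually.of_forall fun z => ?_)
  rw [Pi.add_apply, norm_mul, norm_pow, norm_pow, Complex.norm_conj, ← pow_add]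
  rcases le_total ‖z‖ 1 with hz | hz
  · linarith [pow_le_one₀ (norm_nonneg z) hz (n := i + j), pow_nonneg (norm_nonneg z) m]
  · linarith [pow_le_pow_right₀ hz hij]

theorem flat_data_moments_general (n : ℕ) (hn : 1 ≤ n) (γ : ℕ → ℕ → ℂ)
    (hflat : (momentMatrix n γ).rank = (momentMatrix (n - 1) γ).rank)
    (μ : Measure ℂ) (hμ : IsRepr n γ μ) :
    Integrable (fun z : ℂ => ‖z‖ ^ (2 * n + 2)) μ ∧
    ∀ i j : ℕ, i + j ≤ 2 * n + 2 →
      Integrable (fun z : ℂ => (starRingEnd ℂ) z ^ i * z ^ j) μ := by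
  obtain ⟨c, hc⟩ := hμ.exists_conj_pow_ae_eq_sum_monomial hflat
  have hL2 : MemLp (fun z => ∑ s, c s * (z ^ ((s.1.1 : ℕ) + 1) * conj z ^ (s.1.2 : ℕ))) 2 μ :=
    memLp_finsetSum _ fun s _ => by
      have hs : (s.1.1 : ℕ) + 1 + s.1.2 ≤ n := by have := s.2; omega
      exact (hμ.memLp_pow_mul_conj_pow hs).const_mul (c s)
  have hnorm : Integrable (fun z : ℂ => ‖z‖ ^ (2 * n + 2)) μ := by
    refine ((memLp_two_iff_integrable_sq_norm hL2.1).1 hL2).congr ?_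
    filter_upwards [hc] with z hz
    have hsum :
        ∑ s, c s * (z ^ ((s.1.1 : ℕ) + 1) * conj z ^ (s.1.2 : ℕ)) = z * conj z ^ n := by
      rw [hz, Finset.mul_sum]
      refine Finset.sum_congr rfl fun s _ => ?_
      rw [MomIdx.monomial]
      ring
    rw [hsum, norm_mul, norm_pow, Complex.norm_conj]
    ring
  have := hμ.isFiniteMeasure
  exact ⟨hnorm, fun i j hij => integrable_conj_pow_mul_pow_of_integrable_norm_pow hnorm hij⟩

/-- A representing measure `μ` for flat data `γ^{(2n)}` satisfies
`∫ |z|^{2n+2} dμ < ∞`; in particular `μ` has convergent moments up to degree `2n + 2`. -/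
theorem flat_data_moments (n : ℕ) (hn : 1 ≤ n) (γ : ℕ → ℕ → ℂ)
    (hpsd : (momentMatrix n γ).PosSemidef)
    (hflat : (momentMatrix n γ).rank = (momentMatrix (n - 1) γ).rank)
    (μ : Measure ℂ) (hμ : IsRepr n γ μ) :
    Integrable (fun z : ℂ => ‖z‖ ^ (2 * n + 2)) μ ∧
    ∀ i j : ℕ, i + j ≤ 2 * n + 2 →
      Integrable (fun z : ℂ => (starRingEnd ℂ) z ^ i * z ^ j) μ :=
  flat_data_moments_general n hn γ hflat μ hμ
end

section
/- Let p(z,z̄) = z^k − q(z,z̄) where q is a complex polynomial in z and z̄ of total degree at most k−1. Then p has at most k² zeros in ℂ. -/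
/-!
On a finite set `t` of zeros, consider the algebra of functions `t → ℂ` with the coordinate
functions `x = z` and `y = z̄`. The equation and its conjugate let one lower the degree of any
monomial `y^p x^q` having `p ≥ k` or `q ≥ k`, so the `k²` monomials with `p, q < k` span all
monomials. The powers of `x` alone already span `t → ℂ` (Lagrange interpolation), hence
`#t = dim (t → ℂ) ≤ k²`.
-/

open Submodule

theorem Set.finite_and_ncard_le_of_forall_finset_card_le {α : Type*} {s : Set α} {n : ℕ}
    (h : ∀ t : Finset α, ↑t ⊆ s → t.card ≤ n) : s.Finite ∧ s.ncard ≤ n := by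
  have hs : s.Finite := Set.not_infinite.mp fun hinf => by
    obtain ⟨t, hts, hcard⟩ := hinf.exists_subset_card_eq (n + 1)
    have := h t hts
    omega
  refine ⟨hs, ?_⟩
  rw [Set.ncard_eq_toFinset_card s hs]
  exact h _ (by simp)

theorem span_range_pow_eq_top_of_injective {ι K : Type*} [Fintype ι] [Field K] {f : ι → K}
    (hf : Function.Injective f) : span K (Set.range fun n : ℕ => f ^ n) = ⊤ := by
  classical
  refine eq_top_iff'.mpr fun φ => ?_
  set P := Lagrange.interpolate Finset.univ f φ
  have hφ : φ = ∑ n ∈ Finset.range (P.natDegree + 1), P.coeff n • f ^ n := by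
    funext i
    rw [← Lagrange.eval_interpolate_at_node φ hf.injOn (Finset.mem_univ i),
      Polynomial.eval_eq_sum_range]
    simp [P]
  rw [hφ]
  exact sum_mem fun n _ => smul_mem _ _ (subset_span ⟨n, rfl⟩)

theorem mul_pow_mem_span_of_pow_mem_span {K A : Type*} [CommSemiring K] [CommSemiring A]
    [Algebra K A] {x y : A} {k : ℕ}
    (hx : x ^ k ∈ span K {y ^ i * x ^ j | (i) (j) (_ : i + j < k)})
    (hy : y ^ k ∈ span K {y ^ i * x ^ j | (i) (j) (_ : i + j < k)}) (p q : ℕ) :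
    y ^ p * x ^ q ∈
      span K (Set.range fun ij : Fin k × Fin k => y ^ (ij.1 : ℕ) * x ^ (ij.2 : ℕ)) := by
  set V := span K (Set.range fun ij : Fin k × Fin k => y ^ (ij.1 : ℕ) * x ^ (ij.2 : ℕ))
  have mul_low_mem : ∀ c m, m ∈ span K {y ^ i * x ^ j | (i) (j) (_ : i + j < k)} →
      (∀ i j, i + j < k → c * (y ^ i * x ^ j) ∈ V) → c * m ∈ V := by
    intro c m hm hc
    refine span_le (p := V.comap (LinearMap.mulLeft K c)) |>.mpr ?_ hm
    rintro _ ⟨i, j, hij, rfl⟩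
    exact hc i j hij
  induction h : p + q using Nat.strong_induction_on generalizing p q with
  | _ n ih =>
    by_cases hq : k ≤ q
    · have : y ^ p * x ^ q = y ^ p * x ^ (q - k) * x ^ k := by
        rw [mul_assoc, ← pow_add, Nat.sub_add_cancel hq]
      refine this ▸ mul_low_mem _ _ hx fun i j hij => ?_
      convert ih (p + i + (q - k + j)) (by omega) (p + i) (q - k + j) rfl using 1
      ring
    by_cases hp : k ≤ p
    · have : y ^ p * x ^ q = y ^ (p - k) * x ^ q * y ^ k := by
        rw [mul_right_comm, ← pow_add, Nat.sub_add_cancel hp]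
      refine this ▸ mul_low_mem _ _ hy fun i j hij => ?_
      convert ih (p - k + i + (q + j)) (by omega) (p - k + i) (q + j) rfl using 1
      ring
    exact subset_span ⟨(⟨p, by omega⟩, ⟨q, by omega⟩), rfl⟩

theorem card_le_sq_of_forall_pow_eq_sum_conj_mul (k : ℕ) (a : ℕ → ℕ → ℂ)
    (t : Finset ℂ)
    (ht : ∀ z ∈ t, z ^ k = ∑ i ∈ Finset.range k, ∑ j ∈ Finset.range (k - i),
        a i j * (starRingEnd ℂ) z ^ i * z ^ j) : t.card ≤ k ^ 2 := by
  let x : t → ℂ := fun z => z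
  let y : t → ℂ := fun z => starRingEnd ℂ z
  have hx : x ^ k ∈ span ℂ {y ^ i * x ^ j | (i) (j) (_ : i + j < k)} := by
    have : x ^ k = ∑ i ∈ Finset.range k, ∑ j ∈ Finset.range (k - i),
        a i j • (y ^ i * x ^ j) := by
      funext z
      simp [x, y, ht z z.2, mul_assoc]
    refine this ▸ sum_mem fun i hi => sum_mem fun j hj => smul_mem _ _ (subset_span ?_)
    simp only [Finset.mem_range] at hi hj
    exact ⟨i, j, by omega, rfl⟩
  have hy : y ^ k ∈ span ℂ {y ^ i * x ^ j | (i) (j) (_ : i + j < k)} := by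
    have : y ^ k = ∑ i ∈ Finset.range k, ∑ j ∈ Finset.range (k - i),
        starRingEnd ℂ (a i j) • (y ^ j * x ^ i) := by
      funext z
      simp only [y, x, Pi.pow_apply, ← map_pow, ht z z.2, map_sum, map_mul, Finset.sum_apply,
        Pi.smul_apply, Pi.mul_apply, Complex.conj_conj, smul_eq_mul]
      exact Finset.sum_congr rfl fun i _ => Finset.sum_congr rfl fun j _ => by ring
    refine this ▸ sum_mem fun i hi => sum_mem fun j hj => smul_mem _ _ (subset_span ?_)
    simp only [Finset.mem_range] at hi hj
    exact ⟨j, i, by omega, rfl⟩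
  have hspan : span ℂ (Set.range fun p : Fin k × Fin k => y ^ p.1.val * x ^ p.2.val) = ⊤ := by
    refine eq_top_iff.mpr ?_
    rw [← span_range_pow_eq_top_of_injective Subtype.val_injective, span_le]
    rintro _ ⟨n, rfl⟩
    simpa using mul_pow_mem_span_of_pow_mem_span hx hy 0 n
  simpa [Module.finrank_fintype_fun_eq_card, sq] using finrank_le_of_span_eq_top hspan

/-- A polynomial of the form `p(z, z̄) = z^k − q(z, z̄)` with `deg q ≤ k − 1`
has at most `k²` roots in `ℂ`. -/
theorem zeros_of_zk_minus_q (k : ℕ) (a : ℕ → ℕ → ℂ) :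
    ({z : ℂ | z ^ k = ∑ i ∈ Finset.range k, ∑ j ∈ Finset.range (k - i),
        a i j * (starRingEnd ℂ) z ^ i * z ^ j}).Finite ∧
    Set.ncard {z : ℂ | z ^ k = ∑ i ∈ Finset.range k, ∑ j ∈ Finset.range (k - i),
        a i j * (starRingEnd ℂ) z ^ i * z ^ j} ≤ k ^ 2 :=
  Set.finite_and_ncard_le_of_forall_finset_card_le fun t ht =>
    card_le_sq_of_forall_pow_eq_sum_conj_mul k a t fun _ hz => ht hz
end
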